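/- Let P and Q be orthogonal projections on a Hilbert space H whose difference P − Q is compact. Then the operator Q restricted to the range of P, viewed as an operator im P → im Q, is Fredholm. -/

import Mathlib

noncomputable section

open ContinuousLinearMap Set

section Aux

variable {H : Type*} [NormedAddCommGroup H] [InnerProductSpace ℂ H] [CompleteSpace H]

/-- Riesz: a closed subspace on which a compact operator acts as the identity is
finite-dimensional. -/
lemma aux_fd {K : H →L[ℂ] H} (hK : IsCompactOperator K)
    {N : Submodule ℂ H} (hNc : IsClosed (N : Set H)) (hfix : ∀ x ∈ N, K x = x) :
    FiniteDimensional ℂ N := by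
  have hcomp : IsCompact (closure ((K : H →ₗ[ℂ] H) '' Metric.closedBall 0 1)) :=
    hK.isCompact_closure_image_closedBall 1
  refine FiniteDimensional.of_isCompact_closedBall₀ ℂ one_pos (r := 1) ?_
  rw [Subtype.isCompact_iff]
  refine hcomp.of_isClosed_subset ?_ ?_
  · have : (Subtype.val '' Metric.closedBall (0 : N) 1)
        = (N : Set H) ∩ Metric.closedBall (0 : H) 1 := by
      ext x
      constructor
      · rintro ⟨y, hy, rfl⟩
        exact ⟨y.2, by simpa [Metric.mem_closedBall, dist_eq_norm] using hy⟩
      · rintro ⟨hxN, hx⟩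
        exact ⟨⟨x, hxN⟩, by simpa [Metric.mem_closedBall, dist_eq_norm] using hx, rfl⟩
    rw [this]
    exact hNc.inter Metric.isClosed_closedBall
  · rintro _ ⟨y, hy, rfl⟩
    have hyx : ((y : H)) ∈ Metric.closedBall (0 : H) 1 := by
      simpa [Metric.mem_closedBall, dist_eq_norm] using hy
    have : (y : H) = K (y : H) := (hfix _ y.2).symm
    exact subset_closure ⟨(y : H), hyx, this.symm⟩

/-- Bounded-below estimate on a closed subspace whose only fixed point of `K` is `0`. -/
lemma aux_bound {K : H →L[ℂ] H} (hK : IsCompactOperator K)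
    {M : Submodule ℂ H} (hMc : IsClosed (M : Set H))
    (hfix : ∀ x ∈ M, K x = x → x = 0) :
    ∃ c : ℝ, 0 < c ∧ ∀ x ∈ M, c * ‖x‖ ≤ ‖x - K x‖ := by
  by_contra hc
  push_neg at hc
  have hseq : ∀ n : ℕ, ∃ u : H, u ∈ M ∧ ‖u‖ = 1 ∧ ‖u - K u‖ < 1 / (n + 1) := by
    intro n
    obtain ⟨x, hxM, hx⟩ := hc (1 / (n + 1)) (by positivity)
    have hx0 : x ≠ 0 := by
      rintro rfl
      simp at hx
    have hxpos : (0:ℝ) < ‖x‖ := norm_pos_iff.2 hx0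
    have hnc : ‖((‖x‖ : ℂ))⁻¹‖ = ‖x‖⁻¹ := by
      rw [norm_inv, Complex.norm_real, norm_norm]
    refine ⟨((‖x‖ : ℂ))⁻¹ • x, M.smul_mem _ hxM, ?_, ?_⟩
    · rw [norm_smul, hnc]
      exact inv_mul_cancel₀ (norm_ne_zero_iff.2 hx0)
    · have : ((‖x‖ : ℂ))⁻¹ • x - K (((‖x‖ : ℂ))⁻¹ • x) = ((‖x‖ : ℂ))⁻¹ • (x - K x) := by
        rw [map_smul, smul_sub]
      rw [this, norm_smul, hnc]
      calc ‖x‖⁻¹ * ‖x - K x‖ < ‖x‖⁻¹ * (1 / (n + 1) * ‖x‖) := by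
            exact mul_lt_mul_of_pos_left hx (by positivity)
        _ = 1 / (n + 1) := by field_simp
  choose u huM hun hulim using hseq
  have hcomp : IsCompact (closure ((K : H →ₗ[ℂ] H) '' Metric.closedBall 0 1)) :=
    hK.isCompact_closure_image_closedBall 1
  have hmem : ∀ n, K (u n) ∈ closure ((K : H →ₗ[ℂ] H) '' Metric.closedBall 0 1) := fun n =>
    subset_closure ⟨u n, by simp [Metric.mem_closedBall, dist_eq_norm, hun n], rfl⟩
  obtain ⟨z, _, φ, hφ, hz⟩ := hcomp.tendsto_subseq hmem
  have hdiff : Filter.Tendsto (fun n => u (φ n) - K (u (φ n))) Filter.atTop (nhds 0) := by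
    rw [tendsto_iff_norm_sub_tendsto_zero]
    refine squeeze_zero (fun n => norm_nonneg _) (fun n => ?_)
      (tendsto_one_div_add_atTop_nhds_zero_nat.comp hφ.tendsto_atTop)
    simp only [sub_zero, Function.comp]
    exact (hulim (φ n)).le
  have huz : Filter.Tendsto (fun n => u (φ n)) Filter.atTop (nhds z) := by
    have := hdiff.add hz
    simpa using this
  have hzM : z ∈ M := hMc.mem_of_tendsto huz (Filter.Eventually.of_forall fun n => huM _)
  have hKz : Filter.Tendsto (fun n => K (u (φ n))) Filter.atTop (nhds (K z)) :=
    (K.continuous.tendsto z).comp huz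
  have hKzz : K z = z := tendsto_nhds_unique hKz hz
  have hz0 : z = 0 := hfix z hzM hKzz
  have hnz : ‖z‖ = 1 := by
    have : Filter.Tendsto (fun n => ‖u (φ n)‖) Filter.atTop (nhds ‖z‖) := huz.norm
    have h1 : Filter.Tendsto (fun _ : ℕ => (1:ℝ)) Filter.atTop (nhds ‖z‖) := by
      simpa [hun] using this
    exact (tendsto_nhds_unique tendsto_const_nhds h1).symm
  rw [hz0] at hnz
  simp at hnz

end Aux

/-- A bounded operator between normed spaces is Fredholm if its kernel is
finite-dimensional, its range is closed, and its cokernel is finite-dimensional. -/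
def IsFredholm {E F : Type*} [NormedAddCommGroup E] [NormedAddCommGroup F]
    [NormedSpace ℂ E] [NormedSpace ℂ F] (T : E →L[ℂ] F) : Prop :=
  FiniteDimensional ℂ (LinearMap.ker (T : E →ₗ[ℂ] F)) ∧
    FiniteDimensional ℂ (F ⧸ LinearMap.range (T : E →ₗ[ℂ] F)) ∧
    IsClosed (LinearMap.range (T : E →ₗ[ℂ] F) : Set F)

/-- Let `P` and `Q` be orthogonal projections on a (complex) Hilbert space `H`
whose difference `P − Q` is compact.  Then the operator `Q` restricted to the range of `P`,
viewed as an operator `im P → im Q`, is Fredholm. -/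
theorem projection_restricted_to_range_isFredholm
    {H : Type*} [NormedAddCommGroup H] [InnerProductSpace ℂ H] [CompleteSpace H]
    (P Q : H →L[ℂ] H)
    (hP : IsIdempotentElem P) (hPsa : ContinuousLinearMap.adjoint P = P)
    (hQ : IsIdempotentElem Q) (hQsa : ContinuousLinearMap.adjoint Q = Q)
    (hPQ : IsCompactOperator (P - Q : H →L[ℂ] H)) :
    _root_.IsFredholm ((Q.comp (Submodule.subtypeL (LinearMap.range (P : H →ₗ[ℂ] H)))).codRestrict
      (LinearMap.range (Q : H →ₗ[ℂ] H)) (fun x => LinearMap.mem_range_self (Q : H →ₗ[ℂ] H) _)) := by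
  set T := ((Q.comp (Submodule.subtypeL (LinearMap.range (P : H →ₗ[ℂ] H)))).codRestrict
      (LinearMap.range (Q : H →ₗ[ℂ] H)) (fun x => LinearMap.mem_range_self (Q : H →ₗ[ℂ] H) _)) with hT
  -- basic facts
  have hPid : ∀ x ∈ LinearMap.range (P : H →ₗ[ℂ] H), P x = x := by
    rintro _ ⟨y, rfl⟩
    have := congrArg (fun A : H →L[ℂ] H => A y) hP
    simpa using this
  have hQid : ∀ x ∈ LinearMap.range (Q : H →ₗ[ℂ] H), Q x = x := by
    rintro _ ⟨y, rfl⟩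
    have := congrArg (fun A : H →L[ℂ] H => A y) hQ
    simpa using this
  have hUmem : ∀ x : H, x ∈ LinearMap.range (P : H →ₗ[ℂ] H) ↔ P x = x := fun x =>
    ⟨fun h => hPid x h, fun h => ⟨x, h⟩⟩
  have hVmem : ∀ x : H, x ∈ LinearMap.range (Q : H →ₗ[ℂ] H) ↔ Q x = x := fun x =>
    ⟨fun h => hQid x h, fun h => ⟨x, h⟩⟩
  have hUc : IsClosed ((LinearMap.range (P : H →ₗ[ℂ] H) : Submodule ℂ H) : Set H) := by
    have : ((LinearMap.range (P : H →ₗ[ℂ] H) : Submodule ℂ H) : Set H)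
        = ((LinearMap.ker ((ContinuousLinearMap.id ℂ H - P : H →L[ℂ] H) : H →ₗ[ℂ] H) : Submodule ℂ H) : Set H) := by
      ext x
      simp only [SetLike.mem_coe, LinearMap.mem_ker, ContinuousLinearMap.coe_sub',
        Pi.sub_apply, ContinuousLinearMap.coe_id', id_eq, ContinuousLinearMap.coe_coe, hUmem x, sub_eq_zero]
      exact ⟨fun h => h.symm, fun h => h.symm⟩
    rw [this]
    exact ContinuousLinearMap.isClosed_ker _
  have hVc : IsClosed ((LinearMap.range (Q : H →ₗ[ℂ] H) : Submodule ℂ H) : Set H) := by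
    have : ((LinearMap.range (Q : H →ₗ[ℂ] H) : Submodule ℂ H) : Set H)
        = ((LinearMap.ker ((ContinuousLinearMap.id ℂ H - Q : H →L[ℂ] H) : H →ₗ[ℂ] H) : Submodule ℂ H) : Set H) := by
      ext x
      simp only [SetLike.mem_coe, LinearMap.mem_ker, ContinuousLinearMap.coe_sub',
        Pi.sub_apply, ContinuousLinearMap.coe_id', id_eq, ContinuousLinearMap.coe_coe, hVmem x, sub_eq_zero]
      exact ⟨fun h => h.symm, fun h => h.symm⟩
    rw [this]
    exact ContinuousLinearMap.isClosed_ker _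
  -- the kernel-related subspace N
  set N : Submodule ℂ H := LinearMap.range (P : H →ₗ[ℂ] H) ⊓ LinearMap.ker (Q : H →ₗ[ℂ] H) with hN
  have hNc : IsClosed (N : Set H) := by
    rw [hN, Submodule.coe_inf]
    exact hUc.inter (ContinuousLinearMap.isClosed_ker Q)
  have hNfix : ∀ x ∈ N, (P - Q) x = x := by
    rintro x ⟨hx1, hx2⟩
    have h1 : P x = x := hPid x hx1
    have h2 : Q x = 0 := hx2
    simp [ContinuousLinearMap.sub_apply, h1, h2]
  have hNfd : FiniteDimensional ℂ N := aux_fd hPQ hNc hNfix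
  -- Kernel of T is finite dimensional
  have hker : FiniteDimensional ℂ (LinearMap.ker (T : ↥(LinearMap.range (P : H →ₗ[ℂ] H)) →ₗ[ℂ] ↥(LinearMap.range (Q : H →ₗ[ℂ] H)))) := by
    have hval : ∀ x : LinearMap.ker (T : ↥(LinearMap.range (P : H →ₗ[ℂ] H)) →ₗ[ℂ] ↥(LinearMap.range (Q : H →ₗ[ℂ] H))), Q ((x : ↥(LinearMap.range (P : H →ₗ[ℂ] H))) : H) = 0 := by
      intro x
      have := x.2
      rw [LinearMap.mem_ker] at this
      exact congrArg Subtype.val this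
    let f : LinearMap.ker (T : ↥(LinearMap.range (P : H →ₗ[ℂ] H)) →ₗ[ℂ] ↥(LinearMap.range (Q : H →ₗ[ℂ] H))) →ₗ[ℂ] N :=
      { toFun := fun x => ⟨((x : ↥(LinearMap.range (P : H →ₗ[ℂ] H))) : H),
          ⟨(x : ↥(LinearMap.range (P : H →ₗ[ℂ] H))).2, hval x⟩⟩
        map_add' := fun x y => rfl
        map_smul' := fun c x => rfl }
    have hinj : Function.Injective f := by
      intro x y hxy
      have h5 : (f x : H) = (f y : H) := congrArg Subtype.val hxy
      exact Subtype.ext (Subtype.ext h5)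
    exact FiniteDimensional.of_injective f hinj
  -- orthogonal complement machinery inside range P
  haveI : CompleteSpace N := FiniteDimensional.complete ℂ N
  set M : Submodule ℂ H := LinearMap.range (P : H →ₗ[ℂ] H) ⊓ Nᗮ with hM
  have hMc : IsClosed (M : Set H) := by
    rw [hM, Submodule.coe_inf]
    exact hUc.inter N.isClosed_orthogonal
  have hMfix : ∀ x ∈ M, (P - Q) x = x → x = 0 := by
    rintro x ⟨hx1, hx2⟩ hfix
    have h1 : P x = x := hPid x hx1
    have h2 : Q x = 0 := by
      have : P x - Q x = x := hfix
      rw [h1] at this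
      linear_combination (norm := module) -this
    have hxN : x ∈ N := ⟨hx1, h2⟩
    have := (Submodule.mem_orthogonal N x).1 hx2 x hxN
    exact inner_self_eq_zero.1 this
  obtain ⟨c, hcpos, hcb⟩ := aux_bound hPQ hMc hMfix
  have hQbound : ∀ x ∈ M, c * ‖x‖ ≤ ‖Q x‖ := by
    intro x hx
    have h1 : P x = x := hPid x hx.1
    have : x - (P - Q) x = Q x := by
      simp [ContinuousLinearMap.sub_apply, h1]
    calc c * ‖x‖ ≤ ‖x - (P - Q) x‖ := hcb x hx
      _ = ‖Q x‖ := by rw [this]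
  -- the restricted operator to M
  set A : M →L[ℂ] H := Q.comp (Submodule.subtypeL M) with hA
  haveI : CompleteSpace M := hMc.completeSpace_coe
  have hAanti : AntilipschitzWith (Real.toNNReal c⁻¹) A := by
    apply A.antilipschitz_of_bound
    intro x
    have hb := hQbound (x : H) x.2
    have hcinv : (0:ℝ) ≤ c⁻¹ := le_of_lt (by positivity)
    rw [Real.coe_toNNReal _ hcinv]
    have h6 : ‖(x : H)‖ ≤ c⁻¹ * ‖Q (x : H)‖ := by
      rw [← div_eq_inv_mul, le_div_iff₀ hcpos, mul_comm]
      exact hb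
    simpa [hA] using h6
  have hrangeA : IsClosed (Set.range A) :=
    hAanti.isClosed_range A.uniformContinuous
  -- range A = Q '' (range P)
  have hrangeAeq : Set.range A = Q '' (LinearMap.range (P : H →ₗ[ℂ] H) : Set H) := by
    apply Set.Subset.antisymm
    · rintro _ ⟨x, rfl⟩
      exact ⟨(x : H), x.2.1, rfl⟩
    · rintro _ ⟨x, hx, rfl⟩
      have hn : ((N.orthogonalProjectionOnto x : N) : H) ∈ N := (N.orthogonalProjectionOnto x).2
      set m : H := x - ((N.orthogonalProjectionOnto x : N) : H) with hm
      have hmP : m ∈ LinearMap.range (P : H →ₗ[ℂ] H) := by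
        apply Submodule.sub_mem _ hx
        exact hn.1
      have hmO : m ∈ Nᗮ := Submodule.sub_starProjection_mem_orthogonal (K := N) x
      have hQn : Q (((N.orthogonalProjectionOnto x : N) : H)) = 0 := hn.2
      refine ⟨⟨m, hmP, hmO⟩, ?_⟩
      show Q m = Q x
      rw [hm, map_sub, hQn, sub_zero]
  -- range of T is closed
  have hrangeT : IsClosed ((LinearMap.range (T : ↥(LinearMap.range (P : H →ₗ[ℂ] H)) →ₗ[ℂ] ↥(LinearMap.range (Q : H →ₗ[ℂ] H))) : Submodule ℂ ↥(LinearMap.range (Q : H →ₗ[ℂ] H))) :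
      Set ↥(LinearMap.range (Q : H →ₗ[ℂ] H))) := by
    have heq : ((LinearMap.range (T : ↥(LinearMap.range (P : H →ₗ[ℂ] H)) →ₗ[ℂ] ↥(LinearMap.range (Q : H →ₗ[ℂ] H))) : Submodule ℂ ↥(LinearMap.range (Q : H →ₗ[ℂ] H))) :
        Set ↥(LinearMap.range (Q : H →ₗ[ℂ] H))) = Subtype.val ⁻¹' (Set.range A) := by
      ext y
      simp only [SetLike.mem_coe, LinearMap.mem_range, Set.mem_preimage, hrangeAeq]
      constructor
      · rintro ⟨x, rfl⟩
        exact ⟨(x : H), x.2, rfl⟩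
      · rintro ⟨x, hx, hxy⟩
        exact ⟨⟨x, hx⟩, Subtype.ext hxy⟩
    rw [heq]
    exact hrangeA.preimage continuous_subtype_val
  -- cokernel
  have hcoker : FiniteDimensional ℂ
      (↥(LinearMap.range (Q : H →ₗ[ℂ] H)) ⧸ (LinearMap.range (T : ↥(LinearMap.range (P : H →ₗ[ℂ] H)) →ₗ[ℂ] ↥(LinearMap.range (Q : H →ₗ[ℂ] H))) : Submodule ℂ ↥(LinearMap.range (Q : H →ₗ[ℂ] H)))) := by
    haveI : CompleteSpace ↥(LinearMap.range (Q : H →ₗ[ℂ] H)) := hVc.completeSpace_coe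
    set R : Submodule ℂ ↥(LinearMap.range (Q : H →ₗ[ℂ] H)) := LinearMap.range (T : ↥(LinearMap.range (P : H →ₗ[ℂ] H)) →ₗ[ℂ] ↥(LinearMap.range (Q : H →ₗ[ℂ] H))) with hR
    haveI : CompleteSpace R := hrangeT.completeSpace_coe
    -- N' : elements of range Q killed by P
    set N' : Submodule ℂ H := LinearMap.range (Q : H →ₗ[ℂ] H) ⊓ LinearMap.ker (P : H →ₗ[ℂ] H) with hN'
    have hN'c : IsClosed (N' : Set H) := by
      rw [hN', Submodule.coe_inf]
      exact hVc.inter (ContinuousLinearMap.isClosed_ker P)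
    have hQPcompact : IsCompactOperator ((Q - P : H →L[ℂ] H) : H → H) := by
      have hneg := hPQ.neg
      have : ((Q - P : H →L[ℂ] H) : H → H) = -((P - Q : H →L[ℂ] H) : H → H) := by
        funext x
        simp [ContinuousLinearMap.sub_apply]
      rw [this]
      exact hneg
    have hN'fix : ∀ x ∈ N', (Q - P) x = x := by
      rintro x ⟨hx1, hx2⟩
      have h1 : Q x = x := hQid x hx1
      have h2 : P x = 0 := hx2
      simp [ContinuousLinearMap.sub_apply, h1, h2]
    have hN'fd : FiniteDimensional ℂ N' := aux_fd hQPcompact hN'c hN'fix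
    -- orthogonal complement of R injects into N'
    have hRorth : ∀ y : Rᗮ, ((y : ↥(LinearMap.range (Q : H →ₗ[ℂ] H))) : H) ∈ N' := by
      intro y
      have hyQ : ((y : ↥(LinearMap.range (Q : H →ₗ[ℂ] H))) : H) ∈ LinearMap.range (Q : H →ₗ[ℂ] H) :=
        (y : ↥(LinearMap.range (Q : H →ₗ[ℂ] H))).2
      refine ⟨hyQ, LinearMap.mem_ker.mpr ?_⟩
      set v : H := ((y : ↥(LinearMap.range (Q : H →ₗ[ℂ] H))) : H) with hv
      have hkey : ∀ x : H, inner ℂ (Q (P x)) v = (0 : ℂ) := by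
        intro x
        have hTx : T ⟨P x, ⟨x, rfl⟩⟩ ∈ R := LinearMap.mem_range_self _ _
        have := (Submodule.mem_orthogonal R (y : ↥(LinearMap.range (Q : H →ₗ[ℂ] H)))).1 y.2
          _ hTx
        have h2 : (inner ℂ (T ⟨P x, ⟨x, rfl⟩⟩ : ↥(LinearMap.range (Q : H →ₗ[ℂ] H)))
            (y : ↥(LinearMap.range (Q : H →ₗ[ℂ] H))) : ℂ) = inner ℂ (Q (P x)) v := rfl
        rw [← h2]
        exact this
      have hPx : ∀ x : H, (inner ℂ x (P v) : ℂ) = 0 := by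
        intro x
        have hQv : Q v = v := hQid v hyQ
        have hadj : (inner ℂ (P x) v : ℂ) = inner ℂ x (P v) := by
          conv_lhs => rw [← hPsa]
          exact ContinuousLinearMap.adjoint_inner_left P v x
        have hadj2 : (inner ℂ (Q (P x)) v : ℂ) = inner ℂ (P x) v := by
          conv_lhs => rw [← hQsa]
          rw [ContinuousLinearMap.adjoint_inner_left Q v (P x), hQv]
        rw [← hadj, ← hadj2]
        exact hkey x
      exact inner_self_eq_zero.1 (hPx (P v))
    haveI hRofd : FiniteDimensional ℂ Rᗮ := by
      let g : ↥(Rᗮ) →ₗ[ℂ] N' :=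
        { toFun := fun y => ⟨((y : ↥(LinearMap.range (Q : H →ₗ[ℂ] H))) : H), hRorth y⟩
          map_add' := fun x y => rfl
          map_smul' := fun c x => rfl }
      have hinj : Function.Injective g := by
        intro x y hxy
        have h5 : (g x : H) = (g y : H) := congrArg Subtype.val hxy
        exact Subtype.ext (Subtype.ext h5)
      exact FiniteDimensional.of_injective g hinj
    have hsup : R ⊔ Rᗮ = ⊤ := Submodule.sup_orthogonal_of_hasOrthogonalProjection
    let h : ↥(Rᗮ) →ₗ[ℂ] (↥(LinearMap.range (Q : H →ₗ[ℂ] H)) ⧸ R) :=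
      R.mkQ.comp (Rᗮ.subtype)
    have hsurj : Function.Surjective h := by
      intro z
      obtain ⟨y, rfl⟩ := R.mkQ_surjective z
      have hy : y ∈ R ⊔ Rᗮ := by rw [hsup]; trivial
      obtain ⟨a, ha, b, hb, rfl⟩ := Submodule.mem_sup.1 hy
      refine ⟨⟨b, hb⟩, ?_⟩
      show R.mkQ b = R.mkQ (a + b)
      rw [map_add]
      have : R.mkQ a = 0 := by
        rw [Submodule.mkQ_apply, Submodule.Quotient.mk_eq_zero]
        exact ha
      rw [this, zero_add]
    exact FiniteDimensional.of_surjective h hsurj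
  exact ⟨hker, hcoker, hrangeT⟩
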